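/- There exists a constant c ∈ ℕ with the following property. Let n, r ∈ ℕ, let α = e^{iπ/4}, let l(v) be an affine form, q(v) = ∑_{1≤i<j≤n} q_{ij} v_i v_j a quadratic form, and c(v) = ∑_{1≤i<j<k≤n} c_{ijk} v_i v_j v_k a cubic form, all with integer coefficients, and let L_1, …, L_r be affine forms in v with integer coefficients. Then the function Ψ : {0,1}^n → ℂ defined by Ψ(v) = α^{l(v)} · i^{q(v)} · (−1)^{c(v)} · ∏_{j=1}^r [L_j(v) ≡ 0 (mod 2)] (where [P] is 1 if P holds and 0 otherwise) is exactly representable by an RBM with at most c·(n³ + r + 1) hidden neurons. -/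

import Mathlib

open Complex

/-- A function `f : {0,1}^n → ℂ` is exactly representable by a restricted Boltzmann machine
with `m` hidden neurons if there are complex parameters `a i`, `b j`, `W i j` and a nonzero
constant `C` with
`f v = C · exp(∑ i, a i v i) · ∏ j, (1 + exp(b j + ∑ i, W i j v i))` for all `v ∈ {0,1}^n`. -/
def RBMRepresentable (n m : ℕ) (f : (Fin n → Bool) → ℂ) : Prop :=
  ∃ (C : ℂ) (a : Fin n → ℂ) (b : Fin m → ℂ) (W : Fin n → Fin m → ℂ),
    C ≠ 0 ∧ ∀ v : Fin n → Bool,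
      f v = C * Complex.exp (∑ i, a i * (if v i then 1 else 0)) *
        ∏ j, (1 + Complex.exp (b j + ∑ i, W i j * (if v i then 1 else 0)))

/-!
Hidden units of a product of two RBM functions add up, so it suffices to represent each factor
of `Ψ`. The phase `α^{l(v)}` needs no hidden unit, and a parity constraint `[L(v) ≡ 0 mod 2]` is a
single hidden unit with weights `iπ·L`, because `1 + (-1)^L = 2·[L even]`.

A hidden unit coupled with equal weights to a set `S` of visible units only sees the number `s`
of active ones, and realises `C·A^s·(1 + B·W^s)`. For `|S| = 2` a root `W` of a quadratic makes
this `z^{[s = 2]}` for any `z ≠ 2`, which gives every factor `i^{q v_i v_j}`. For `|S| = 3`,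
`A = α⁻¹` and `W = -1` it is `(-i)^{[s ≥ 2]}`, and
`(-1)^{v_i v_j v_k} = (-i)^{[s ≥ 2]} · i^{v_i v_j} · i^{v_j v_k} · i^{v_i v_k}`,
so each cubic sign costs four hidden units: `n² + 4n³ + r ≤ 5(n³ + r + 1)` in total.
-/

open Finset

theorem zpow_sum₀ {ι G₀ : Type*} [CommGroupWithZero G₀] {a : G₀} (ha : a ≠ 0) (s : Finset ι)
    (f : ι → ℤ) : a ^ ∑ t ∈ s, f t = ∏ t ∈ s, a ^ f t := by
  induction s using Finset.cons_induction with
  | empty => simp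
  | cons b s hb ih => rw [sum_cons, prod_cons, zpow_add₀ ha, ih]

namespace RBMRepresentable

variable {n m m' : ℕ} {f g : (Fin n → Bool) → ℂ}

theorem congr (hf : RBMRepresentable n m f) (h : ∀ v, f v = g v) : RBMRepresentable n m g :=
  funext h ▸ hf

theorem const (m : ℕ) {K : ℂ} (hK : K ≠ 0) : RBMRepresentable n m fun _ => K := by
  refine ⟨K / 2 ^ m, 0, 0, 0, by simpa using hK, fun v => ?_⟩
  simp only [Pi.zero_apply, zero_mul, sum_const_zero, exp_zero, add_zero, mul_one, prod_const,
    card_univ, Fintype.card_fin]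
  norm_num

theorem exp_affine (c₀ : ℂ) (c : Fin n → ℂ) :
    RBMRepresentable n 0 fun v => exp (c₀ + ∑ i, c i * (if v i then 1 else 0)) :=
  ⟨exp c₀, c, 0, 0, exp_ne_zero _, fun v => by simp [exp_add]⟩

theorem mul (hf : RBMRepresentable n m f) (hg : RBMRepresentable n m' g) :
    RBMRepresentable n (m + m') fun v => f v * g v := by
  obtain ⟨C₁, a₁, b₁, W₁, hC₁, hf⟩ := hf
  obtain ⟨C₂, a₂, b₂, W₂, hC₂, hg⟩ := hg
  refine ⟨C₁ * C₂, a₁ + a₂, Fin.append b₁ b₂, fun i => Fin.append (W₁ i) (W₂ i),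
    mul_ne_zero hC₁ hC₂, fun v => ?_⟩
  simp only [hf, hg, Pi.add_apply, add_mul, sum_add_distrib, exp_add, Fin.prod_univ_add,
    Fin.append_left, Fin.append_right]
  ring

theorem finset_prod {ι : Type*} (s : Finset ι) {f : ι → (Fin n → Bool) → ℂ}
    (h : ∀ t ∈ s, RBMRepresentable n m (f t)) :
    RBMRepresentable n (#s * m) fun v => ∏ t ∈ s, f t v := by
  induction s using Finset.cons_induction with
  | empty => simpa using const (n := n) 0 one_ne_zero
  | cons a s ha ih =>
    rw [card_cons, add_mul, one_mul, add_comm]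
    exact ((h a (mem_cons_self a s)).mul (ih fun t ht => h t (mem_cons_of_mem ht))).congr
      fun v => (prod_cons ha (f := fun t => f t v)).symm

theorem card_neuron (S : Finset (Fin n)) {C A B W : ℂ} (hC : C ≠ 0) (hA : A ≠ 0) (hB : B ≠ 0)
    (hW : W ≠ 0) :
    RBMRepresentable n 1 fun v =>
      C * A ^ #{i ∈ S | v i} * (1 + B * W ^ #{i ∈ S | v i}) := by
  have hsum : ∀ (c : ℂ) (v : Fin n → Bool),
      ∑ i, (if i ∈ S then c else 0) * (if v i then 1 else 0) = #{i ∈ S | v i} * c := by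
    intro c v
    simp [mul_ite, ← sum_filter, filter_inter]
  refine ⟨C, fun i => if i ∈ S then log A else 0, fun _ => log B,
    fun i _ => if i ∈ S then log W else 0, hC, fun v => ?_⟩
  simp only [hsum, Fin.prod_univ_one, exp_add, exp_nat_mul, exp_log, hA, hB, hW, ne_eq,
    not_false_eq_true]

end RBMRepresentable

theorem exists_pair_weight {z : ℂ} (hz : z ≠ 2) :
    ∃ u : ℂ, u ≠ 0 ∧ 1 + u ≠ 0 ∧ z * (1 + u) ^ 2 = 2 * (1 + u ^ 2) := by
  have h2z : 2 - z ≠ 0 := sub_ne_zero.mpr hz.symm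
  obtain ⟨u, hu⟩ := exists_quadratic_eq_zero h2z
    (IsAlgClosed.exists_eq_mul_self (discrim (2 - z) (-2 * z) (2 - z)))
  refine ⟨u, ?_, ?_, by linear_combination -hu⟩
  · rintro rfl
    exact h2z (by simpa using hu)
  · intro h
    have : (4 : ℂ) = 0 := by linear_combination hu - ((2 - z) * (u - 1) - 2 * z) * h
    norm_num at this

namespace RBMRepresentable

variable {n : ℕ}

theorem ite_two_le_card_of_card_le_two {S : Finset (Fin n)} (hS : #S ≤ 2) {z : ℂ} (hz : z ≠ 2) :
    RBMRepresentable n 1 fun v => if 2 ≤ #{i ∈ S | v i} then z else 1 := by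
  obtain ⟨u, hu0, hu1, hu⟩ := exists_pair_weight hz
  refine (card_neuron S (C := 1 / 2) (A := 2 / (1 + u)) (B := 1) (W := u) (by norm_num)
    (div_ne_zero two_ne_zero hu1) one_ne_zero hu0).congr fun v => ?_
  have hs : #{i ∈ S | v i} ≤ 2 := (card_filter_le _ _).trans hS
  generalize #{i ∈ S | v i} = s at hs ⊢
  interval_cases s <;> norm_num <;> field_simp
  linear_combination -hu

theorem ite_two_le_card_of_card_le_three {S : Finset (Fin n)} (hS : #S ≤ 3) :
    RBMRepresentable n 1 fun v => if 2 ≤ #{i ∈ S | v i} then -I else 1 := by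
  set α := exp (I * Real.pi / 4)
  have hα : α ^ 2 = I := by
    rw [← exp_nat_mul, show ((2 : ℕ) : ℂ) * (I * Real.pi / 4) = Real.pi / 2 * I by push_cast; ring,
      exp_mul_I, ← ofReal_ofNat, ← ofReal_div, ← ofReal_cos, ← ofReal_sin, Real.cos_pi_div_two,
      Real.sin_pi_div_two]
    simp
  have hα0 : α ≠ 0 := exp_ne_zero _
  have hα_sq_ne_one : α ^ 2 ≠ 1 := by
    rw [hα]
    exact fun h => by simpa using congrArg re h
  have hα_add : 1 + α ≠ 0 := fun h => hα_sq_ne_one (by rw [eq_neg_of_add_eq_zero_right h]; norm_num)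
  have hα_sub : 1 - α ≠ 0 := fun h => hα_sq_ne_one (by rw [← sub_eq_zero.mp h]; norm_num)
  refine (card_neuron S (C := (1 + α) / 2) (A := α⁻¹) (B := (1 - α) / (1 + α)) (W := -1)
    (div_ne_zero hα_add two_ne_zero) (inv_ne_zero hα0) (div_ne_zero hα_sub hα_add)
    (by norm_num)).congr fun v => ?_
  have hs : #{i ∈ S | v i} ≤ 3 := (card_filter_le _ _).trans hS
  generalize #{i ∈ S | v i} = s at hs ⊢
  interval_cases s <;> norm_num <;> field_simp
  · ring
  · ring
  · linear_combination 2 * I * hα + 2 * I_sq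
  · linear_combination 2 * α * I * hα + 2 * α * I_sq

theorem ite_and {i j : Fin n} (hij : i ≠ j) {z : ℂ} (hz : z ≠ 2) :
    RBMRepresentable n 1 fun v => if v i ∧ v j then z else 1 :=
  (ite_two_le_card_of_card_le_two (S := {i, j}) card_le_two hz).congr fun v => by
    cases hi : v i <;> cases hj : v j <;> simp [filter_insert, filter_singleton, hij, hi, hj]

theorem ite_and_and {i j k : Fin n} (hij : i ≠ j) (hjk : j ≠ k) (hik : i ≠ k) :
    RBMRepresentable n 4 fun v => if v i ∧ v j ∧ v k then -1 else 1 := by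
  have hI : I ≠ 2 := fun h => by simpa using congrArg re h
  refine ((((ite_two_le_card_of_card_le_three (S := {i, j, k}) card_le_three).mul
    (ite_and hij hI)).mul (ite_and hjk hI)).mul (ite_and hik hI)).congr fun v => ?_
  cases hi : v i <;> cases hj : v j <;> cases hk : v k <;>
    simp [filter_insert, filter_singleton, hij, hjk, hik, hi, hj, hk]

theorem ite_emod_two_eq_zero (L₀ : ℤ) (L : Fin n → ℤ) :
    RBMRepresentable n 1 fun v =>
      if (L₀ + ∑ i, L i * (if v i then 1 else 0)) % 2 = 0 then 1 else 0 := by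
  refine ⟨1 / 2, 0, fun _ => L₀ * (Real.pi * I), fun i _ => L i * (Real.pi * I), by norm_num,
    fun v => ?_⟩
  set k := L₀ + ∑ i, L i * (if v i then 1 else 0)
  have hk : L₀ * (Real.pi * I) + ∑ i, L i * (Real.pi * I) * (if v i then 1 else 0)
      = (k : ℂ) * (Real.pi * I) := by
    push_cast [k, apply_ite (Int.cast : ℤ → ℂ), add_mul, sum_mul]
    congr 1
    exact sum_congr rfl fun i _ => by ring
  simp only [Pi.zero_apply, zero_mul, sum_const_zero, exp_zero, mul_one, Fin.prod_univ_one, hk,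
    exp_int_mul, exp_pi_mul_I]
  rcases Int.even_or_odd k with he | ho
  · rw [he.neg_one_zpow, if_pos (Int.even_iff.mp he)]
    norm_num
  · rw [ho.neg_one_zpow, if_neg (by rw [Int.odd_iff.mp ho]; norm_num)]
    norm_num

theorem I_zpow_ite_lt (q : ℤ) (i j : Fin n) :
    RBMRepresentable n 1 fun v =>
      I ^ (if i < j then q * (if v i then 1 else 0) * (if v j then 1 else 0) else 0) := by
  by_cases hij : i < j
  · have hz : I ^ q ≠ 2 := fun h => by simpa using congrArg norm h
    refine (ite_and hij.ne hz).congr fun v => ?_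
    cases v i <;> cases v j <;> simp [hij]
  · simpa [hij] using const (n := n) 1 one_ne_zero

theorem neg_one_zpow_ite_lt_lt (c : ℤ) (i j k : Fin n) :
    RBMRepresentable n 4 fun v =>
      (-1 : ℂ) ^ (if i < j ∧ j < k then
        c * (if v i then 1 else 0) * (if v j then 1 else 0) * (if v k then 1 else 0) else 0) := by
  by_cases hijk : i < j ∧ j < k
  · rcases Int.even_or_odd c with hc | hc
    · refine (const 4 one_ne_zero).congr fun v => ?_
      cases v i <;> cases v j <;> cases v k <;> simp [hijk, hc.neg_one_zpow]
    · refine (ite_and_and hijk.1.ne hijk.2.ne (hijk.1.trans hijk.2).ne).congr fun v => ?_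
      cases v i <;> cases v j <;> cases v k <;> simp [hijk, hc.neg_one_zpow]
  · simpa [hijk] using const (n := n) 4 one_ne_zero

end RBMRepresentable

/-- There is a constant `c` such that, with `α = e^{iπ/4}`, for any affine form
`l(v)`, quadratic form `q(v) = ∑_{i<j} q i j v i v j`, cubic form
`cc(v) = ∑_{i<j<k} cc i j k · v i v j v k` and affine forms `L_j(v)` with integer coefficients,
the XS-stabilizer-type amplitude
`Ψ(v) = α^{l(v)} i^{q(v)} (−1)^{cc(v)} ∏_j [L_j(v) ≡ 0 (mod 2)]` is exactly representable by
an RBM with at most `c(n³ + r + 1)` hidden neurons. -/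
theorem xs_stabilizer_amplitude_representable :
    ∃ c : ℕ, ∀ (n r : ℕ) (l0 : ℤ) (lc : Fin n → ℤ) (q : Fin n → Fin n → ℤ)
      (cc : Fin n → Fin n → Fin n → ℤ) (L0 : Fin r → ℤ) (Lc : Fin r → Fin n → ℤ),
      ∃ m ≤ c * (n ^ 3 + r + 1),
        RBMRepresentable n m (fun v =>
          Complex.exp (Complex.I * Real.pi / 4) ^ (l0 + ∑ i, lc i * (if v i then 1 else 0)) *
            Complex.I ^ (∑ i, ∑ j,
              if i < j then q i j * (if v i then 1 else 0) * (if v j then 1 else 0) else 0) *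
            (-1 : ℂ) ^ (∑ i, ∑ j, ∑ k,
              if i < j ∧ j < k then
                cc i j k * (if v i then 1 else 0) * (if v j then 1 else 0) *
                  (if v k then 1 else 0)
              else 0) *
            ∏ j : Fin r,
              (if (L0 j + ∑ i, Lc j i * (if v i then 1 else 0)) % 2 = 0 then 1 else 0)) := by
  refine ⟨5, fun n r l0 lc q cc L0 Lc => ⟨0 + n * n * 1 + n * (n * n) * 4 + r * 1, ?_, ?_⟩⟩
  · have : n * n ≤ n ^ 3 + 1 := by
      rcases n with _ | n
      · simp
      · nlinarith
    nlinarith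
  have hrep :=
    (((RBMRepresentable.exp_affine (l0 * (I * Real.pi / 4)) fun i => lc i * (I * Real.pi / 4)).mul
      (.finset_prod univ fun (p : Fin n × Fin n) _ => .I_zpow_ite_lt (q p.1 p.2) p.1 p.2)).mul
      (.finset_prod univ fun (t : Fin n × Fin n × Fin n) _ =>
        .neg_one_zpow_ite_lt_lt (cc t.1 t.2.1 t.2.2) t.1 t.2.1 t.2.2)).mul
      (.finset_prod univ fun j _ => .ite_emod_two_eq_zero (L0 j) (Lc j))
  simp only [card_univ, Fintype.card_prod, Fintype.card_fin] at hrep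
  refine hrep.congr fun v => ?_
  simp only [← Fintype.sum_prod_type', zpow_sum₀ I_ne_zero,
    zpow_sum₀ (by norm_num : (-1 : ℂ) ≠ 0)]
  congr 3
  rw [← exp_int_mul]
  push_cast [apply_ite (Int.cast : ℤ → ℂ), add_mul, sum_mul]
  congr 2
  exact sum_congr rfl fun i _ => by ring
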